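/- Every QTF f : {-1,1}^n → {-1,1} supported on a bipartite graph G on vertex set {1,...,n} satisfies I[f] ≤ √2 · √n. -/
import Mathlib


open Finset
open scoped Classical

noncomputable section

/-- The Boolean cube `{-1,1}^V` as a finset of functions `V → ℤ`. -/
def cube (V : Type*) [Fintype V] [DecidableEq V] : Finset (V → ℤ) :=
  Fintype.piFinset fun _ => ({-1, 1} : Finset ℤ)

/-- Negate the `i`-th coordinate. -/
def flipAt {V : Type*} [DecidableEq V] (x : V → ℤ) (i : V) : V → ℤ :=
  Function.update x i (-(x i))

/-- Influence of coordinate `i` on `f`: the probability over a uniform point of the cube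
that flipping coordinate `i` changes the value of `f`. -/
def coordInf {V : Type*} [Fintype V] [DecidableEq V] {α : Type*} (f : (V → ℤ) → α) (i : V) : ℝ :=
  (∑ x ∈ cube V, if f x ≠ f (flipAt x i) then (1 : ℝ) else 0) / (cube V).card

/-- Total influence of `f`. -/
def totalInf {V : Type*} [Fintype V] [DecidableEq V] {α : Type*} (f : (V → ℤ) → α) : ℝ :=
  ∑ i : V, coordInf f i

/-- Sign function, with `sgn 0 = 0`. -/
def sgn (t : ℝ) : ℤ := if 0 < t then 1 else if t < 0 then -1 else 0

/-- A quadratic multilinear polynomial `∑_{i<j} a_{ij} x_i x_j + ∑_i b_i x_i + c`. -/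
def quadPoly {V : Type*} [Fintype V] [LinearOrder V] (a : V → V → ℝ) (b : V → ℝ) (c : ℝ)
    (x : V → ℤ) : ℝ :=
  (∑ i : V, ∑ j : V, if i < j then a i j * x i * x j else 0) + (∑ i : V, b i * x i) + c

/-- `f` is a QTF supported on the graph `G`: it has a quadratic representation whose
cross terms only involve edges of `G`, and whose polynomial is nonvanishing on the cube. -/
def IsQTFSupportedOn {V : Type*} [Fintype V] [LinearOrder V] (G : SimpleGraph V)
    (f : (V → ℤ) → ℤ) : Prop :=
  ∃ a b c, (∀ i j : V, i < j → a i j ≠ 0 → G.Adj i j) ∧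
    (∀ x ∈ cube V, quadPoly a b c x ≠ 0) ∧
    (∀ x ∈ cube V, f x = sgn (quadPoly a b c x))

/-! ### Auxiliary lemmas -/

set_option linter.unusedSectionVars false

section Aux

variable {V : Type*} [Fintype V] [DecidableEq V]

lemma mem_cube {x : V → ℤ} : x ∈ cube V ↔ ∀ i, x i = -1 ∨ x i = 1 := by
  simp [cube, Fintype.mem_piFinset]

lemma cube_card_pos : 0 < (cube V).card :=
  Finset.card_pos.2 ⟨fun _ => 1, by simp [mem_cube]⟩

lemma flipAt_self (x : V → ℤ) (i : V) : flipAt x i i = -(x i) := by simp [flipAt]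

lemma flipAt_ne (x : V → ℤ) {i j : V} (h : j ≠ i) : flipAt x i j = x j := by
  simp [flipAt, Function.update_of_ne h]

lemma flipAt_flipAt (x : V → ℤ) (i : V) : flipAt (flipAt x i) i = x := by
  funext j
  by_cases h : j = i
  · subst h; simp [flipAt]
  · simp [flipAt, Function.update_of_ne h]

lemma flipAt_mem_cube {x : V → ℤ} (hx : x ∈ cube V) (i : V) : flipAt x i ∈ cube V := by
  rw [mem_cube] at hx ⊢
  intro j
  by_cases h : j = i
  · subst h; rw [flipAt_self]; rcases hx j with h' | h' <;> simp [h']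
  · rw [flipAt_ne _ h]; exact hx j

lemma sum_flipAt (g : (V → ℤ) → ℝ) (i : V) :
    ∑ x ∈ cube V, g (flipAt x i) = ∑ x ∈ cube V, g x := by
  refine Finset.sum_nbij' (fun x => flipAt x i) (fun x => flipAt x i)
    (fun x hx => flipAt_mem_cube hx i) (fun x hx => flipAt_mem_cube hx i)
    (fun x _ => flipAt_flipAt x i) (fun x _ => flipAt_flipAt x i) (fun x _ => rfl)

lemma sq_coord {x : V → ℤ} (hx : x ∈ cube V) (i : V) : (x i : ℝ) * (x i : ℝ) = 1 := by
  rcases mem_cube.1 hx i with h | h <;> simp [h]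

lemma sgn_cases {t : ℝ} (h : t ≠ 0) : sgn t = 1 ∧ 0 < t ∨ sgn t = -1 ∧ t < 0 := by
  rcases lt_trichotomy t 0 with h' | h' | h'
  · right; constructor; · simp [sgn, h', asymm h']
    exact h'
  · exact absurd h' h
  · left; exact ⟨by simp [sgn, h'], h'⟩

/-- Core lemma: the total influence over a set `A` of coordinates, along each of which
the threshold function is unate with orientation signs invariant under flips inside `A`,
is at most `√|A|`. -/
lemma sum_coordInf_le (A : Finset V) (f : (V → ℤ) → ℤ) (p : (V → ℤ) → ℝ)
    (ε : V → (V → ℤ) → ℝ)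
    (hp : ∀ x ∈ cube V, p x ≠ 0)
    (hfp : ∀ x ∈ cube V, f x = sgn (p x))
    (hε1 : ∀ i ∈ A, ∀ x, ε i x = 1 ∨ ε i x = -1)
    (hεinv : ∀ i ∈ A, ∀ j ∈ A, ∀ x, ε i (flipAt x j) = ε i x)
    (hmono : ∀ i ∈ A, ∀ x ∈ cube V, 0 ≤ ε i x * (x i : ℝ) * (p x - p (flipAt x i))) :
    ∑ i ∈ A, coordInf f i ≤ Real.sqrt A.card := by
  set N : ℝ := ((cube V).card : ℝ) with hN
  have hN0 : 0 < N := by rw [hN]; exact_mod_cast cube_card_pos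
  set S : (V → ℤ) → ℝ := fun x => ∑ i ∈ A, ε i x * (x i : ℝ) with hS
  -- pointwise identity
  have key1 : ∀ x ∈ cube V, ∀ i ∈ A,
      (if f x ≠ f (flipAt x i) then (1 : ℝ) else 0) * 2
        = ε i x * (x i : ℝ) * ((f x : ℝ) - (f (flipAt x i) : ℝ)) := by
    intro x hx i hi
    have hx' := flipAt_mem_cube hx i
    have hfx := hfp x hx
    have hfx' := hfp _ hx'
    have hpx := sgn_cases (hp x hx)
    have hpx' := sgn_cases (hp _ hx')
    have hexi : ε i x * (x i : ℝ) = 1 ∨ ε i x * (x i : ℝ) = -1 := by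
      rcases hε1 i hi x with h | h <;> rcases mem_cube.1 hx i with h' | h' <;>
        simp [h, h']
    by_cases hne : f x ≠ f (flipAt x i)
    · rw [if_pos hne]
      have hm := hmono i hi x hx
      rcases hpx with ⟨h1, h1'⟩ | ⟨h1, h1'⟩ <;> rcases hpx' with ⟨h2, h2'⟩ | ⟨h2, h2'⟩
      · exact absurd (by rw [hfx, hfx', h1, h2]) hne
      · have hd : 0 < p x - p (flipAt x i) := by linarith
        have : ε i x * (x i : ℝ) = 1 := by
          rcases hexi with h | h
          · exact h
          · exfalso; rw [h] at hm; nlinarith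
        rw [this, hfx, hfx', h1, h2]; norm_num
      · have hd : 0 < p (flipAt x i) - p x := by linarith
        have : ε i x * (x i : ℝ) = -1 := by
          rcases hexi with h | h
          · exfalso; rw [h] at hm; nlinarith
          · exact h
        rw [this, hfx, hfx', h1, h2]; norm_num
      · exact absurd (by rw [hfx, hfx', h1, h2]) hne
    · rw [if_neg hne]
      push_neg at hne
      rw [hne]
      ring
  -- sum identity via the flip bijection
  have key2 : ∑ x ∈ cube V, ∑ i ∈ A, (if f x ≠ f (flipAt x i) then (1 : ℝ) else 0)
      = ∑ x ∈ cube V, S x * (f x : ℝ) := by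
    have h2 : (2:ℝ) * ∑ x ∈ cube V, ∑ i ∈ A, (if f x ≠ f (flipAt x i) then (1 : ℝ) else 0)
        = 2 * ∑ x ∈ cube V, S x * (f x : ℝ) := by
      calc (2:ℝ) * ∑ x ∈ cube V, ∑ i ∈ A, (if f x ≠ f (flipAt x i) then (1 : ℝ) else 0)
          = ∑ x ∈ cube V, ∑ i ∈ A, ε i x * (x i : ℝ) * ((f x : ℝ) - (f (flipAt x i) : ℝ)) := by
            rw [Finset.mul_sum]
            refine Finset.sum_congr rfl fun x hx => ?_
            rw [Finset.mul_sum]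
            refine Finset.sum_congr rfl fun i hi => ?_
            rw [← key1 x hx i hi]; ring
        _ = ∑ i ∈ A, (∑ x ∈ cube V, ε i x * (x i : ℝ) * (f x : ℝ)
              - ∑ x ∈ cube V, ε i x * (x i : ℝ) * (f (flipAt x i) : ℝ)) := by
            rw [Finset.sum_comm]
            refine Finset.sum_congr rfl fun i hi => ?_
            rw [← Finset.sum_sub_distrib]
            refine Finset.sum_congr rfl fun x hx => ?_
            ring
        _ = ∑ i ∈ A, (2 * ∑ x ∈ cube V, ε i x * (x i : ℝ) * (f x : ℝ)) := by
            refine Finset.sum_congr rfl fun i hi => ?_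
            have : ∑ x ∈ cube V, ε i x * (x i : ℝ) * (f (flipAt x i) : ℝ)
                = ∑ x ∈ cube V, ε i (flipAt x i) * ((flipAt x i) i : ℝ) * (f (flipAt (flipAt x i) i) : ℝ) := by
              rw [sum_flipAt (fun y => ε i y * (y i : ℝ) * (f (flipAt y i) : ℝ)) i]
            rw [this]
            have : ∑ x ∈ cube V, ε i (flipAt x i) * ((flipAt x i) i : ℝ) * (f (flipAt (flipAt x i) i) : ℝ)
                = ∑ x ∈ cube V, -(ε i x * (x i : ℝ) * (f x : ℝ)) := by
              refine Finset.sum_congr rfl fun x hx => ?_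
              rw [hεinv i hi i hi, flipAt_flipAt, flipAt_self]
              push_cast; ring
            rw [this, Finset.sum_neg_distrib]
            ring
        _ = 2 * ∑ x ∈ cube V, S x * (f x : ℝ) := by
            rw [← Finset.mul_sum, Finset.sum_comm]
            congr 1
            refine Finset.sum_congr rfl fun x hx => ?_
            simp only [hS, Finset.sum_mul]
    linarith
  -- |f| = 1 bound
  have key3 : ∑ x ∈ cube V, S x * (f x : ℝ) ≤ ∑ x ∈ cube V, |S x| := by
    refine Finset.sum_le_sum fun x hx => ?_
    have : (f x : ℝ) = 1 ∨ (f x : ℝ) = -1 := by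
      rcases sgn_cases (hp x hx) with ⟨h, _⟩ | ⟨h, _⟩ <;>
        rw [hfp x hx, h] <;> simp
    rcases this with h | h <;> rw [h] <;>
      [skip; skip] <;> first
      | (rw [mul_one]; exact le_abs_self _)
      | (rw [mul_neg_one]; exact neg_le_abs _)
  -- sum of squares
  have key5 : ∑ x ∈ cube V, S x ^ 2 = N * A.card := by
    have : ∀ x ∈ cube V, S x ^ 2
        = ∑ i ∈ A, ∑ j ∈ A, (ε i x * (x i : ℝ)) * (ε j x * (x j : ℝ)) := by
      intro x hx
      rw [hS, sq, Finset.sum_mul_sum]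
    rw [Finset.sum_congr rfl this, Finset.sum_comm]
    have : ∀ i ∈ A, ∑ x ∈ cube V, ∑ j ∈ A, (ε i x * (x i : ℝ)) * (ε j x * (x j : ℝ))
        = ∑ j ∈ A, ∑ x ∈ cube V, (ε i x * (x i : ℝ)) * (ε j x * (x j : ℝ)) := fun i _ =>
      Finset.sum_comm
    rw [Finset.sum_congr rfl this]
    have hdiag : ∀ i ∈ A, ∀ j ∈ A,
        ∑ x ∈ cube V, (ε i x * (x i : ℝ)) * (ε j x * (x j : ℝ)) = if i = j then N else 0 := by
      intro i hi j hj
      by_cases hij : i = j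
      · subst hij
        rw [if_pos rfl]
        have : ∀ x ∈ cube V, (ε i x * (x i : ℝ)) * (ε i x * (x i : ℝ)) = 1 := by
          intro x hx
          have h1 := sq_coord hx i
          rcases hε1 i hi x with h | h <;> rw [h] <;> nlinarith
        rw [Finset.sum_congr rfl this, Finset.sum_const, nsmul_eq_mul, mul_one]
      · rw [if_neg hij]
        have hrev : ∑ x ∈ cube V, (ε i x * (x i : ℝ)) * (ε j x * (x j : ℝ))
            = ∑ x ∈ cube V, (ε i (flipAt x i) * ((flipAt x i) i : ℝ)) * (ε j (flipAt x i) * ((flipAt x i) j : ℝ)) := by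
          rw [sum_flipAt (fun y => (ε i y * (y i : ℝ)) * (ε j y * (y j : ℝ))) i]
        have hneg : ∀ x ∈ cube V,
            (ε i (flipAt x i) * ((flipAt x i) i : ℝ)) * (ε j (flipAt x i) * ((flipAt x i) j : ℝ))
            = -((ε i x * (x i : ℝ)) * (ε j x * (x j : ℝ))) := by
          intro x hx
          rw [hεinv i hi i hi, hεinv j hj i hi, flipAt_self, flipAt_ne x (Ne.symm hij)]
          push_cast; ring
        have h0 := hrev.trans (Finset.sum_congr rfl hneg)
        rw [Finset.sum_neg_distrib] at h0
        linarith [h0]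
    calc ∑ i ∈ A, ∑ j ∈ A, ∑ x ∈ cube V, (ε i x * (x i : ℝ)) * (ε j x * (x j : ℝ))
        = ∑ i ∈ A, ∑ j ∈ A, if i = j then N else 0 := by
          refine Finset.sum_congr rfl fun i hi => Finset.sum_congr rfl fun j hj => hdiag i hi j hj
      _ = ∑ i ∈ A, N := by
          refine Finset.sum_congr rfl fun i hi => ?_
          simp [Finset.sum_ite_eq, hi]
      _ = N * A.card := by rw [Finset.sum_const, nsmul_eq_mul, mul_comm]
  -- Cauchy–Schwarz
  have key4 : ∑ x ∈ cube V, |S x| ≤ N * Real.sqrt A.card := by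
    have h1 : (∑ x ∈ cube V, |S x|) ^ 2 ≤ N * (N * A.card) := by
      have := sq_sum_le_card_mul_sum_sq (s := cube V) (f := fun x => |S x|)
      calc (∑ x ∈ cube V, |S x|) ^ 2 ≤ (cube V).card * ∑ x ∈ cube V, |S x| ^ 2 := this
        _ = N * ∑ x ∈ cube V, S x ^ 2 := by
            rw [hN]
            congr 1
            exact Finset.sum_congr rfl fun x _ => sq_abs _
        _ = N * (N * A.card) := by rw [key5]
    have h2 : 0 ≤ ∑ x ∈ cube V, |S x| := Finset.sum_nonneg fun x _ => abs_nonneg _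
    have h3 : N * Real.sqrt A.card = Real.sqrt (N * (N * A.card)) := by
      rw [show N * (N * (A.card:ℝ)) = N^2 * A.card by ring, Real.sqrt_mul (by positivity),
        Real.sqrt_sq hN0.le]
    rw [h3]
    exact (Real.le_sqrt h2 (by positivity)).2 h1
  -- combine
  have hfinal : ∑ i ∈ A, coordInf f i
      = (∑ x ∈ cube V, ∑ i ∈ A, (if f x ≠ f (flipAt x i) then (1 : ℝ) else 0)) / N := by
    have hc : ∀ i, coordInf f i
        = (∑ x ∈ cube V, if f x ≠ f (flipAt x i) then (1 : ℝ) else 0) / N := by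
      intro i
      unfold coordInf
      rw [hN]
      congr 1
      refine Finset.sum_congr rfl fun x _ => ?_
      by_cases h : f x ≠ f (flipAt x i) <;> simp [h]
    rw [Finset.sum_congr rfl fun i _ => hc i, ← Finset.sum_div, Finset.sum_comm]
  rw [hfinal, key2]
  rw [div_le_iff₀ hN0]
  calc ∑ x ∈ cube V, S x * (f x : ℝ) ≤ ∑ x ∈ cube V, |S x| := key3
    _ ≤ N * Real.sqrt A.card := key4
    _ = Real.sqrt A.card * N := mul_comm _ _

end Aux

lemma coordInf_congr {V : Type*} [Fintype V] {α : Type*} (d1 d2 : DecidableEq V)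
    (f : (V → ℤ) → α) (i : V) : @coordInf V _ d1 α f i = @coordInf V _ d2 α f i := by
  have h : d1 = d2 := Subsingleton.elim _ _
  subst h
  rfl

section Poly

variable {V : Type*} [Fintype V] [LinearOrder V]

/-- Symmetric coefficient lookup: the coefficient of `x i * x j` in the quadratic part. -/
def atil (a : V → V → ℝ) (i j : V) : ℝ :=
  if i < j then a i j else if j < i then a j i else 0

/-- The linear coefficient of `x i` in the quadratic polynomial, given the other coords. -/
def Wcoef (a : V → V → ℝ) (b : V → ℝ) (i : V) (x : V → ℤ) : ℝ :=
  (∑ j : V, atil a i j * (x j : ℝ)) + b i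

lemma quadPoly_diff (a : V → V → ℝ) (b : V → ℝ) (c : ℝ) (x : V → ℤ) (i : V) :
    quadPoly a b c x - quadPoly a b c (flipAt x i) = 2 * (x i : ℝ) * Wcoef a b i x := by
  classical
  set y := flipAt x i with hy
  have hyi : ((y i : ℤ) : ℝ) = -((x i : ℤ) : ℝ) := by rw [hy, flipAt_self]; push_cast; ring
  have hyne : ∀ j : V, j ≠ i → ((y j : ℤ) : ℝ) = ((x j : ℤ) : ℝ) := fun j hj => by
    rw [hy, flipAt_ne x hj]
  have hquad : (∑ k : V, ∑ l : V, if k < l then a k l * x k * x l else 0)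
      - (∑ k : V, ∑ l : V, if k < l then a k l * y k * y l else 0)
      = ∑ k : V, ∑ l : V,
        ((if k = i then (if i < l then 2 * a i l * x i * x l else 0) else 0)
          + (if l = i then (if k < i then 2 * a k i * x k * x i else 0) else 0)) := by
    rw [← Finset.sum_sub_distrib]
    refine Finset.sum_congr rfl fun k _ => ?_
    rw [← Finset.sum_sub_distrib]
    refine Finset.sum_congr rfl fun l _ => ?_
    rcases eq_or_ne k i with hk | hk
    · subst hk
      rcases eq_or_ne l k with hl | hl
      · subst hl
        simp [lt_irrefl]
      · rw [if_pos rfl, if_neg hl, add_zero]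
        by_cases ho : k < l
        · rw [if_pos ho, if_pos ho, if_pos ho, hyi, hyne l hl]
          ring
        · rw [if_neg ho, if_neg ho, if_neg ho]
          ring
    · rcases eq_or_ne l i with hl | hl
      · subst hl
        rw [if_neg hk, if_pos rfl, zero_add]
        by_cases ho : k < l
        · rw [if_pos ho, if_pos ho, if_pos ho, hyi, hyne k hk]
          ring
        · rw [if_neg ho, if_neg ho, if_neg ho]
          ring
      · rw [hyne k hk, hyne l hl, if_neg hk, if_neg hl]
        ring
  have hlin : (∑ k : V, b k * x k) - (∑ k : V, b k * y k) = 2 * b i * x i := by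
    rw [← Finset.sum_sub_distrib]
    rw [Finset.sum_eq_single i]
    · rw [hyi]; ring
    · intro k _ hk
      rw [hyne k hk]; ring
    · intro h; exact absurd (Finset.mem_univ i) h
  have hsplit : ∑ k : V, ∑ l : V,
        ((if k = i then (if i < l then 2 * a i l * x i * x l else 0) else 0)
          + (if l = i then (if k < i then 2 * a k i * x k * x i else 0) else 0))
      = (∑ l : V, if i < l then 2 * a i l * x i * x l else 0)
        + (∑ k : V, if k < i then 2 * a k i * x k * x i else 0) := by
    rw [Finset.sum_congr rfl fun k (_ : k ∈ univ) => Finset.sum_add_distrib,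
      Finset.sum_add_distrib]
    congr 1
    · rw [Finset.sum_eq_single i (fun k _ hk => by simp [hk])
        (fun h => absurd (Finset.mem_univ i) h)]
      simp
    · refine Finset.sum_congr rfl fun k _ => ?_
      rw [Finset.sum_eq_single i (fun l _ hl => by simp [hl])
        (fun h => absurd (Finset.mem_univ i) h)]
      simp
  have hW : 2 * (x i : ℝ) * Wcoef a b i x
      = ((∑ l : V, if i < l then 2 * a i l * x i * x l else 0)
        + (∑ k : V, if k < i then 2 * a k i * x k * x i else 0)) + 2 * b i * x i := by
    unfold Wcoef atil
    rw [mul_add, Finset.mul_sum]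
    have : ∀ j : V, 2 * (x i : ℝ) * ((if i < j then a i j else if j < i then a j i else 0) * (x j : ℝ))
        = (if i < j then 2 * a i j * x i * x j else 0)
          + (if j < i then 2 * a j i * x j * x i else 0) := by
      intro j
      rcases lt_trichotomy i j with h | h | h
      · rw [if_pos h, if_pos h, if_neg (asymm h)]; ring
      · subst h; rw [if_neg (lt_irrefl i), if_neg (lt_irrefl i), if_neg (lt_irrefl i)]; ring
      · rw [if_neg (asymm h), if_pos h, if_neg (asymm h), if_pos h]; ring
    rw [Finset.sum_congr rfl fun j _ => this j, Finset.sum_add_distrib]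
    ring
  unfold quadPoly
  have : ((∑ k : V, ∑ l : V, if k < l then a k l * x k * x l else 0) + (∑ k : V, b k * x k) + c)
      - ((∑ k : V, ∑ l : V, if k < l then a k l * y k * y l else 0) + (∑ k : V, b k * y k) + c)
      = ((∑ k : V, ∑ l : V, if k < l then a k l * x k * x l else 0)
          - (∑ k : V, ∑ l : V, if k < l then a k l * y k * y l else 0))
        + ((∑ k : V, b k * x k) - (∑ k : V, b k * y k)) := by ring
  rw [this, hquad, hlin, hsplit, hW]

/-- Flipping a coordinate with the same color as `i` does not change `Wcoef i`. -/
lemma Wcoef_flipAt (G : SimpleGraph V) (a : V → V → ℝ) (b : V → ℝ)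
    (ha : ∀ i j : V, i < j → a i j ≠ 0 → G.Adj i j) (C : G.Coloring (Fin 2))
    {i j : V} (hC : C i = C j) (x : V → ℤ) :
    Wcoef a b i (flipAt x j) = Wcoef a b i x := by
  unfold Wcoef
  congr 1
  refine Finset.sum_congr rfl fun l _ => ?_
  rcases eq_or_ne l j with rfl | hl
  · have h0 : atil a i l = 0 := by
      unfold atil
      rcases lt_trichotomy i l with h | h | h
      · rw [if_pos h]
        by_contra hne
        exact (C.valid (ha i l h hne)) hC
      · rw [if_neg (h ▸ lt_irrefl i), if_neg (h ▸ lt_irrefl i)]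
      · rw [if_neg (asymm h), if_pos h]
        by_contra hne
        exact (C.valid (ha l i h hne)) hC.symm
    rw [h0, zero_mul, zero_mul]
  · rw [flipAt_ne x hl]

/-- The influence over a single color class is at most the square root of its size. -/
lemma sum_class_le (G : SimpleGraph V) (C : G.Coloring (Fin 2))
    (a : V → V → ℝ) (b : V → ℝ) (c : ℝ) (f : (V → ℤ) → ℤ)
    (ha : ∀ i j : V, i < j → a i j ≠ 0 → G.Adj i j)
    (hp : ∀ x ∈ cube V, quadPoly a b c x ≠ 0)
    (hfp : ∀ x ∈ cube V, f x = sgn (quadPoly a b c x))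
    (A : Finset V) (hA : ∀ i ∈ A, ∀ j ∈ A, C i = C j) :
    ∑ i ∈ A, coordInf f i ≤ Real.sqrt A.card := by
  refine sum_coordInf_le A f (quadPoly a b c)
    (fun i x => if 0 ≤ Wcoef a b i x then 1 else -1) hp hfp ?_ ?_ ?_
  · intro i _ x
    by_cases h : 0 ≤ Wcoef a b i x <;> simp [h]
  · intro i hi j hj x
    simp only [Wcoef_flipAt G a b ha C (hA i hi j hj) x]
  · intro i _ x hx
    rw [quadPoly_diff]
    have hsq := sq_coord hx i
    show 0 ≤ (if 0 ≤ Wcoef a b i x then (1:ℝ) else -1) * (x i : ℝ)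
      * (2 * (x i : ℝ) * Wcoef a b i x)
    by_cases h : 0 ≤ Wcoef a b i x
    · rw [if_pos h]; nlinarith
    · rw [if_neg h]; push_neg at h; nlinarith

end Poly

/-- Every QTF supported on a bipartite (2-colorable) graph satisfies `I[f] ≤ √2 · √n`. -/
theorem qtf_influence_bipartite {n : ℕ} (G : SimpleGraph (Fin n)) (hbip : G.Colorable 2)
    (f : (Fin n → ℤ) → ℤ) (hf : IsQTFSupportedOn G f) :
    totalInf f ≤ Real.sqrt 2 * Real.sqrt n := by
  obtain ⟨a, b, c, ha, hp, hfp⟩ := hf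
  obtain ⟨C⟩ := hbip
  set A : Finset (Fin n) := univ.filter (fun i => C i = 0) with hA
  set B : Finset (Fin n) := univ.filter (fun i => ¬ C i = 0) with hB
  have hA' : ∀ i ∈ A, ∀ j ∈ A, C i = C j := by
    intro i hi j hj
    rw [hA, Finset.mem_filter] at hi hj
    rw [hi.2, hj.2]
  have hB' : ∀ i ∈ B, ∀ j ∈ B, C i = C j := by
    intro i hi j hj
    rw [hB, Finset.mem_filter] at hi hj
    have e : ∀ u : Fin 2, ¬ u = 0 → u = 1 := by decide
    rw [e _ hi.2, e _ hj.2]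
  have h1 := sum_class_le G C a b c f ha hp hfp A hA'
  have h2 := sum_class_le G C a b c f ha hp hfp B hB'
  have h1' : ∑ i ∈ A, coordInf f i ≤ Real.sqrt A.card := by
    refine le_trans (le_of_eq ?_) h1
    exact Finset.sum_congr rfl fun i _ => coordInf_congr _ _ f i
  have h2' : ∑ i ∈ B, coordInf f i ≤ Real.sqrt B.card := by
    refine le_trans (le_of_eq ?_) h2
    exact Finset.sum_congr rfl fun i _ => coordInf_congr _ _ f i
  have hsplit : totalInf f = (∑ i ∈ A, coordInf f i) + (∑ i ∈ B, coordInf f i) :=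
    (Finset.sum_filter_add_sum_filter_not univ _ _).symm
  have hcard : (A.card : ℝ) + (B.card : ℝ) = n := by
    have := Finset.card_filter_add_card_filter_not
      (s := (univ : Finset (Fin n))) (p := fun i => C i = 0)
    rw [Finset.card_univ, Fintype.card_fin] at this
    exact_mod_cast this
  have hle : Real.sqrt A.card + Real.sqrt B.card ≤ Real.sqrt 2 * Real.sqrt n := by
    have ha0 : (0:ℝ) ≤ A.card := Nat.cast_nonneg _
    have hb0 : (0:ℝ) ≤ B.card := Nat.cast_nonneg _
    have hsa := Real.sq_sqrt ha0
    have hsb := Real.sq_sqrt hb0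
    have hkey : (Real.sqrt A.card + Real.sqrt B.card) ^ 2 ≤ 2 * n := by
      nlinarith [sq_nonneg (Real.sqrt A.card - Real.sqrt B.card)]
    have hxn : (0:ℝ) ≤ Real.sqrt A.card + Real.sqrt B.card := by positivity
    have hfin := (Real.le_sqrt hxn (by positivity)).2 hkey
    calc Real.sqrt A.card + Real.sqrt B.card ≤ Real.sqrt (2 * n) := hfin
      _ = Real.sqrt 2 * Real.sqrt n := Real.sqrt_mul (by norm_num) _
  calc totalInf f = (∑ i ∈ A, coordInf f i) + (∑ i ∈ B, coordInf f i) := hsplit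
    _ ≤ Real.sqrt A.card + Real.sqrt B.card := add_le_add h1' h2'
    _ ≤ Real.sqrt 2 * Real.sqrt n := hle
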